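/- In an SM-game, a fixed point w* (i.e. ξ(w*) = 0) is a stable fixed point (vᵀ J(w*) v < 0 for all v ≠ 0) if and only if for every player i the Hessian ∇²_{wᵢwᵢ} πᵢ(w*) is negative definite. -/

import Mathlib

open Matrix
open scoped BigOperators

/-- Partial derivative of `F` in the coordinate `k = ⟨i, a⟩` at `w`. -/
noncomputable def pd {n : ℕ} {d : Fin n → ℕ}
    (k : Σ i : Fin n, Fin (d i))
    (F : (∀ i, Fin (d i) → ℝ) → ℝ) (w : ∀ i, Fin (d i) → ℝ) : ℝ :=
  deriv (fun t : ℝ =>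
    F (Function.update w k.1 (Function.update (w k.1) k.2 t))) (w k.1 k.2)

section Aux

variable {n : ℕ} {d : Fin n → ℕ}

/-- The standard basis vector of the product space at coordinate `k`. -/
noncomputable def ebasis (k : Σ i : Fin n, Fin (d i)) : ∀ i, Fin (d i) → ℝ :=
  Pi.single k.1 (Pi.single k.2 1)

lemma path_eq (k : Σ i : Fin n, Fin (d i)) (w : ∀ i, Fin (d i) → ℝ) (t : ℝ) :
    Function.update w k.1 (Function.update (w k.1) k.2 t)
      = w + (t - w k.1 k.2) • ebasis k := by
  classical
  funext i
  by_cases hi : i = k.1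
  · subst hi
    funext b
    by_cases hb : b = k.2
    · subst hb
      simp [ebasis, Pi.single_eq_same]
    · simp [ebasis, Function.update_of_ne hb, Pi.single_eq_same, Pi.single_eq_of_ne hb]
  · simp [ebasis, Function.update_of_ne hi, Pi.single_eq_of_ne hi]

/-- Derivative of a function along an affine line. -/
lemma hasDerivAt_line {E : Type*} [NormedAddCommGroup E] [NormedSpace ℝ E]
    {G : E → ℝ} {w : E} (v : E) (hG : DifferentiableAt ℝ G w) :
    HasDerivAt (fun s : ℝ => G (w + s • v)) (fderiv ℝ G w v) 0 := by
  have hγ : HasDerivAt (fun s : ℝ => w + s • v) v 0 := by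
    simpa using ((hasDerivAt_id (0 : ℝ)).smul_const v).const_add w
  have := hG.hasFDerivAt.comp_hasDerivAt_of_eq 0 hγ (by simp)
  simpa [Function.comp_def] using this

lemma pd_hasDerivAt {F : (∀ i, Fin (d i) → ℝ) → ℝ} {w : ∀ i, Fin (d i) → ℝ}
    (k : Σ i : Fin n, Fin (d i)) (hF : DifferentiableAt ℝ F w) :
    HasDerivAt (fun t : ℝ =>
        F (Function.update w k.1 (Function.update (w k.1) k.2 t)))
      (fderiv ℝ F w (ebasis k)) (w k.1 k.2) := by
  have hγ : HasDerivAt (fun t : ℝ => w + (t - w k.1 k.2) • ebasis k) (ebasis k)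
      (w k.1 k.2) := by
    simpa using (((hasDerivAt_id (w k.1 k.2)).sub_const (w k.1 k.2)).smul_const
      (ebasis k)).const_add w
  have h := hF.hasFDerivAt.comp_hasDerivAt_of_eq (w k.1 k.2) hγ (by simp)
  have hfun : (fun t : ℝ =>
      F (Function.update w k.1 (Function.update (w k.1) k.2 t)))
      = fun t : ℝ => F (w + (t - w k.1 k.2) • ebasis k) := by
    funext t; rw [path_eq]
  rw [hfun]
  simpa [Function.comp_def] using h

lemma pd_eq_fderiv {F : (∀ i, Fin (d i) → ℝ) → ℝ} {w : ∀ i, Fin (d i) → ℝ}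
    (k : Σ i : Fin n, Fin (d i)) (hF : DifferentiableAt ℝ F w) :
    pd k F w = fderiv ℝ F w (ebasis k) :=
  (pd_hasDerivAt k hF).deriv

lemma fderiv_apply_hasFDerivAt {F : (∀ i, Fin (d i) → ℝ) → ℝ}
    (hF : ContDiff ℝ 2 F) (c : ∀ i, Fin (d i) → ℝ) (w : ∀ i, Fin (d i) → ℝ) :
    HasFDerivAt (fun w' => fderiv ℝ F w' c)
      ((ContinuousLinearMap.apply ℝ ℝ c).comp (fderiv ℝ (fderiv ℝ F) w)) w := by
  have hd1 : ContDiff ℝ 1 (fderiv ℝ F) := hF.fderiv_right (by norm_num)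
  have hdf : DifferentiableAt ℝ (fderiv ℝ F) w := (hd1.differentiable one_ne_zero) w
  exact (ContinuousLinearMap.apply ℝ ℝ c).hasFDerivAt.comp w hdf.hasFDerivAt

lemma pd_pd_eq {F : (∀ i, Fin (d i) → ℝ) → ℝ} (hF : ContDiff ℝ 2 F)
    (k l : Σ i : Fin n, Fin (d i)) (w : ∀ i, Fin (d i) → ℝ) :
    pd l (pd k F) w = fderiv ℝ (fderiv ℝ F) w (ebasis l) (ebasis k) := by
  have hd : Differentiable ℝ F := hF.differentiable two_ne_zero
  have h1 : pd k F = fun w' => fderiv ℝ F w' (ebasis k) :=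
    funext fun w' => pd_eq_fderiv k (hd w')
  rw [h1, pd_eq_fderiv l (fderiv_apply_hasFDerivAt hF (ebasis k) w).differentiableAt,
    (fderiv_apply_hasFDerivAt hF (ebasis k) w).fderiv]
  rfl

/-- The crucial antisymmetry: for players `i ≠ j`, the cross-block entries of the
second derivatives of `π i` and `π j` cancel, by the zero-sum structure. -/
lemma cross_zero
    (f : ∀ i, (Fin (d i) → ℝ) → ℝ)
    (g : ∀ i j, (Fin (d i) → ℝ) → (Fin (d j) → ℝ) → ℝ)
    (hzs : ∀ i j x y, g i j x y + g j i y x = 0)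
    (π : ∀ _ : Fin n, (∀ i, Fin (d i) → ℝ) → ℝ)
    (hπ : ∀ i w, π i w = f i (w i) + ∑ j ∈ Finset.univ.erase i, g i j (w i) (w j))
    (hsmooth : ∀ i, ContDiff ℝ 2 (π i))
    (w : ∀ i, Fin (d i) → ℝ)
    (k l : Σ i : Fin n, Fin (d i)) (hkl : k.1 ≠ l.1) :
    fderiv ℝ (fderiv ℝ (π k.1)) w (ebasis l) (ebasis k)
      + fderiv ℝ (fderiv ℝ (π l.1)) w (ebasis l) (ebasis k) = 0 := by
  classical
  obtain ⟨i, a⟩ := k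
  obtain ⟨j, b⟩ := l
  simp only at hkl ⊢
  set ek : ∀ m, Fin (d m) → ℝ := ebasis ⟨i, a⟩ with hek
  set el : ∀ m, Fin (d m) → ℝ := ebasis ⟨j, b⟩ with hel
  set x : ℝ → Fin (d i) → ℝ := fun t => w i + t • (Pi.single a 1 : Fin (d i) → ℝ) with hx
  set y : ℝ → Fin (d j) → ℝ := fun s => w j + s • (Pi.single b 1 : Fin (d j) → ℝ) with hy
  have Wi : ∀ s t : ℝ, (w + s • el + t • ek) i = x t := by
    intro s t
    simp [hek, hel, hx, ebasis, Pi.single_eq_same, Pi.single_eq_of_ne hkl]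
  have Wj : ∀ s t : ℝ, (w + s • el + t • ek) j = y s := by
    intro s t
    simp [hek, hel, hy, ebasis, Pi.single_eq_same, Pi.single_eq_of_ne hkl.symm]
  have Wm : ∀ (s t : ℝ) (m : Fin n), m ≠ i → m ≠ j → (w + s • el + t • ek) m = w m := by
    intro s t m hmi hmj
    simp [hek, hel, ebasis, Pi.single_eq_of_ne hmi, Pi.single_eq_of_ne hmj]
  set A : ℝ → ℝ := fun t =>
    f i (x t) + ∑ j' ∈ (Finset.univ.erase i).erase j, g i j' (x t) (w j') with hA
  set B : ℝ → ℝ := fun s =>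
    f j (y s) + ∑ i' ∈ (Finset.univ.erase j).erase i, g j i' (y s) (w i') with hB
  have key : ∀ s t : ℝ, π i (w + s • el + t • ek) + π j (w + s • el + t • ek)
      = A t + B s := by
    intro s t
    have hjmem : j ∈ Finset.univ.erase i := Finset.mem_erase.2 ⟨hkl.symm, Finset.mem_univ j⟩
    have himem : i ∈ Finset.univ.erase j := Finset.mem_erase.2 ⟨hkl, Finset.mem_univ i⟩
    rw [hπ i, hπ j, Wi, Wj,
      ← Finset.add_sum_erase _ (fun j' => g i j' (x t) ((w + s • el + t • ek) j')) hjmem,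
      ← Finset.add_sum_erase _ (fun i' => g j i' (y s) ((w + s • el + t • ek) i')) himem,
      Wj, Wi]
    have h1 : ∑ j' ∈ (Finset.univ.erase i).erase j, g i j' (x t) ((w + s • el + t • ek) j')
        = ∑ j' ∈ (Finset.univ.erase i).erase j, g i j' (x t) (w j') := by
      refine Finset.sum_congr rfl fun m hm => ?_
      rw [Wm s t m (Finset.mem_erase.1 (Finset.mem_erase.1 hm).2).1 (Finset.mem_erase.1 hm).1]
    have h2 : ∑ i' ∈ (Finset.univ.erase j).erase i, g j i' (y s) ((w + s • el + t • ek) i')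
        = ∑ i' ∈ (Finset.univ.erase j).erase i, g j i' (y s) (w i') := by
      refine Finset.sum_congr rfl fun m hm => ?_
      rw [Wm s t m (Finset.mem_erase.1 hm).1 (Finset.mem_erase.1 (Finset.mem_erase.1 hm).2).1]
    rw [h1, h2, hA, hB]
    simp only
    linarith [hzs i j (x t) (y s)]
  have hdi : Differentiable ℝ (π i) := (hsmooth i).differentiable two_ne_zero
  have hdj : Differentiable ℝ (π j) := (hsmooth j).differentiable two_ne_zero
  set G1 : (∀ m, Fin (d m) → ℝ) → ℝ := fun w' => fderiv ℝ (π i) w' ek with hG1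
  set G2 : (∀ m, Fin (d m) → ℝ) → ℝ := fun w' => fderiv ℝ (π j) w' ek with hG2
  have hconst : ∀ s : ℝ, G1 (w + s • el) + G2 (w + s • el) = deriv A 0 := by
    intro s
    have h1 := (hasDerivAt_line ek (hdi (w + s • el))).add
      (hasDerivAt_line ek (hdj (w + s • el)))
    have h2 : (fun t : ℝ => π i ((w + s • el) + t • ek) + π j ((w + s • el) + t • ek))
        = fun t : ℝ => A t + B s := by
      funext t
      exact key s t
    change HasDerivAt (fun t : ℝ => π i ((w + s • el) + t • ek) + π j ((w + s • el) + t • ek)) _ 0 at h1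
    rw [h2] at h1
    have := h1.deriv
    rw [deriv_add_const] at this
    exact this.symm
  have hG1d := fderiv_apply_hasFDerivAt (hsmooth i) ek w
  have hG2d := fderiv_apply_hasFDerivAt (hsmooth j) ek w
  have hsum : HasFDerivAt (fun w' => G1 w' + G2 w')
      (((ContinuousLinearMap.apply ℝ ℝ ek).comp (fderiv ℝ (fderiv ℝ (π i)) w))
        + ((ContinuousLinearMap.apply ℝ ℝ ek).comp (fderiv ℝ (fderiv ℝ (π j)) w))) w :=
    hG1d.add hG2d
  have hline := hasDerivAt_line el hsum.differentiableAt
  rw [hsum.fderiv] at hline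
  have hfun : (fun s : ℝ => (fun w' => G1 w' + G2 w') (w + s • el))
      = fun _ : ℝ => deriv A 0 := funext hconst
  rw [hfun] at hline
  have hzero := hline.deriv
  rw [deriv_const] at hzero
  have hfin : (((ContinuousLinearMap.apply ℝ ℝ ek).comp (fderiv ℝ (fderiv ℝ (π i)) w))
        + ((ContinuousLinearMap.apply ℝ ℝ ek).comp (fderiv ℝ (fderiv ℝ (π j)) w))) el = 0 :=
    hzero.symm ▸ rfl
  simpa using hfin

end Aux

/-- In an SM-game, a fixed point is stable (vᵀ J v < 0 for all v ≠ 0) iff every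
player's own-block Hessian ∇²_{wᵢwᵢ}πᵢ is negative definite at the point. -/
theorem sm_game_stable_iff_hessians_negdef (n : ℕ) (d : Fin n → ℕ)
    (f : ∀ i, (Fin (d i) → ℝ) → ℝ)
    (g : ∀ i j, (Fin (d i) → ℝ) → (Fin (d j) → ℝ) → ℝ)
    (hzs : ∀ i j x y, g i j x y + g j i y x = 0)
    (π : ∀ _ : Fin n, (∀ i, Fin (d i) → ℝ) → ℝ)
    (hπ : ∀ i w, π i w = f i (w i) + ∑ j ∈ Finset.univ.erase i, g i j (w i) (w j))
    (hsmooth : ∀ i, ContDiff ℝ 2 (π i))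
    (wstar : ∀ i, Fin (d i) → ℝ)
    (hfix : ∀ k : Σ i : Fin n, Fin (d i), pd k (π k.1) wstar = 0) :
    (∀ v : (Σ i : Fin n, Fin (d i)) → ℝ, v ≠ 0 →
        v ⬝ᵥ (Matrix.of fun k l : Σ i : Fin n, Fin (d i) =>
                pd l (pd k (π k.1)) wstar).mulVec v < 0) ↔
    (∀ i : Fin n, ∀ u : Fin (d i) → ℝ, u ≠ 0 →
        u ⬝ᵥ (Matrix.of fun a b : Fin (d i) =>
                pd ⟨i, b⟩ (pd ⟨i, a⟩ (π i)) wstar).mulVec u < 0) := by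
  classical
  set J' : (Σ i : Fin n, Fin (d i)) → (Σ i : Fin n, Fin (d i)) → ℝ :=
    fun k l => pd l (pd k (π k.1)) wstar with hJ'
  have hpd : ∀ (k l : Σ i : Fin n, Fin (d i)),
      J' k l = fderiv ℝ (fderiv ℝ (π k.1)) wstar (ebasis l) (ebasis k) :=
    fun k l => pd_pd_eq (hsmooth k.1) k l wstar
  have hsymm : ∀ i : Fin n, IsSymmSndFDerivAt ℝ (π i) wstar :=
    fun i => (hsmooth i).contDiffAt.isSymmSndFDerivAt (by simp [minSmoothness_of_isRCLikeNormedField])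
  have hcross : ∀ k l : Σ i : Fin n, Fin (d i), k.1 ≠ l.1 → J' k l + J' l k = 0 := by
    intro k l h
    rw [hpd k l, hpd l k, hsymm l.1 (ebasis k) (ebasis l)]
    exact cross_zero f g hzs π hπ hsmooth wstar k l h
  have hdiag : ∀ (i : Fin n) (a b : Fin (d i)),
      J' ⟨i, b⟩ ⟨i, a⟩ = J' ⟨i, a⟩ ⟨i, b⟩ := by
    intro i a b
    rw [hpd ⟨i, b⟩ ⟨i, a⟩, hpd ⟨i, a⟩ ⟨i, b⟩]
    exact hsymm i (ebasis ⟨i, a⟩) (ebasis ⟨i, b⟩)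
  -- the quadratic form splits into per-player blocks
  have quad : ∀ v : (Σ i : Fin n, Fin (d i)) → ℝ,
      v ⬝ᵥ (Matrix.of fun k l : Σ i : Fin n, Fin (d i) =>
              pd l (pd k (π k.1)) wstar).mulVec v
        = ∑ i : Fin n, (fun a => v ⟨i, a⟩) ⬝ᵥ
            (Matrix.of fun a b : Fin (d i) =>
              pd ⟨i, b⟩ (pd ⟨i, a⟩ (π i)) wstar).mulVec (fun a => v ⟨i, a⟩) := by
    intro v
    have lhs_eq : v ⬝ᵥ (Matrix.of fun k l : Σ i : Fin n, Fin (d i) =>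
        pd l (pd k (π k.1)) wstar).mulVec v = ∑ k, ∑ l, v k * v l * J' k l := by
      simp only [dotProduct, Matrix.mulVec, Matrix.of_apply, Finset.mul_sum, hJ']
      exact Finset.sum_congr rfl fun k _ => Finset.sum_congr rfl fun l _ => by ring
    have rhs_eq : (∑ i : Fin n, (fun a => v ⟨i, a⟩) ⬝ᵥ
          (Matrix.of fun a b : Fin (d i) =>
            pd ⟨i, b⟩ (pd ⟨i, a⟩ (π i)) wstar).mulVec (fun a => v ⟨i, a⟩))
        = ∑ i : Fin n, ∑ a, ∑ b, v ⟨i, a⟩ * v ⟨i, b⟩ * J' ⟨i, a⟩ ⟨i, b⟩ := by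
      refine Finset.sum_congr rfl fun i _ => ?_
      simp only [dotProduct, Matrix.mulVec, Matrix.of_apply, Finset.mul_sum, hJ']
      exact Finset.sum_congr rfl fun a _ => Finset.sum_congr rfl fun b _ => by ring
    rw [lhs_eq, rhs_eq]
    set Q : ℝ := ∑ k, ∑ l, v k * v l * J' k l with hQ
    set R : ℝ := ∑ i : Fin n, ∑ a, ∑ b, v ⟨i, a⟩ * v ⟨i, b⟩ * J' ⟨i, a⟩ ⟨i, b⟩ with hR
    have swap : Q = ∑ k, ∑ l, v k * v l * J' l k := by
      rw [hQ, Finset.sum_comm]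
      exact Finset.sum_congr rfl fun k _ => Finset.sum_congr rfl fun l _ => by ring
    have expand : ∀ F : (Σ i : Fin n, Fin (d i)) → (Σ i : Fin n, Fin (d i)) → ℝ,
        (∑ k, ∑ l, F k l) = ∑ i : Fin n, ∑ a, ∑ j : Fin n, ∑ b, F ⟨i, a⟩ ⟨j, b⟩ := by
      intro F
      rw [← Finset.univ_sigma_univ, Finset.sum_sigma]
      refine Finset.sum_congr rfl fun i _ => Finset.sum_congr rfl fun a _ => ?_
      rw [Finset.sum_sigma]
    have step1 : Q + Q = ∑ k, ∑ l, v k * v l * (J' k l + J' l k) := by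
      have : (∑ k, ∑ l, v k * v l * (J' k l + J' l k))
          = (∑ k, ∑ l, (v k * v l * J' k l + v k * v l * J' l k)) :=
        Finset.sum_congr rfl fun k _ => Finset.sum_congr rfl fun l _ => by ring
      rw [this]
      simp only [Finset.sum_add_distrib]
      rw [← hQ, ← swap]
    have step2 : (∑ k, ∑ l, v k * v l * (J' k l + J' l k)) = R + R := by
      rw [expand fun k l => v k * v l * (J' k l + J' l k)]
      have inner : ∀ (i : Fin n) (a : Fin (d i)),
          (∑ j : Fin n, ∑ b, v ⟨i, a⟩ * v ⟨j, b⟩ * (J' ⟨i, a⟩ ⟨j, b⟩ + J' ⟨j, b⟩ ⟨i, a⟩))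
            = ∑ b, (v ⟨i, a⟩ * v ⟨i, b⟩ * J' ⟨i, a⟩ ⟨i, b⟩
                + v ⟨i, a⟩ * v ⟨i, b⟩ * J' ⟨i, a⟩ ⟨i, b⟩) := by
        intro i a
        have h0 : ∀ j : Fin n, j ≠ i →
            (∑ b, v ⟨i, a⟩ * v ⟨j, b⟩ * (J' ⟨i, a⟩ ⟨j, b⟩ + J' ⟨j, b⟩ ⟨i, a⟩)) = 0 := by
          intro j hj
          refine Finset.sum_eq_zero fun b _ => ?_
          rw [hcross ⟨i, a⟩ ⟨j, b⟩ hj.symm, mul_zero]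
        have := Finset.sum_eq_single i
          (fun j _ hj => h0 j hj) (fun h => absurd (Finset.mem_univ i) h)
        rw [this]
        refine Finset.sum_congr rfl fun b _ => ?_
        rw [hdiag i a b]
        ring
      rw [Finset.sum_congr rfl fun i _ => Finset.sum_congr rfl fun a _ => inner i a]
      simp only [Finset.sum_add_distrib]
      rfl
    have := step1.trans step2
    linarith
  constructor
  · intro hstab i u hu
    obtain ⟨a, ha⟩ := Function.ne_iff.1 hu
    set v : (Σ i : Fin n, Fin (d i)) → ℝ := fun k => (Pi.single i u : ∀ j, Fin (d j) → ℝ) k.1 k.2 with hv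
    have hvne : v ≠ 0 := by
      refine Function.ne_iff.2 ⟨⟨i, a⟩, ?_⟩
      simpa [hv, Pi.single_eq_same] using ha
    have := hstab v hvne
    rw [quad v] at this
    have hblocks : (∑ j : Fin n, (fun a => v ⟨j, a⟩) ⬝ᵥ
          (Matrix.of fun a b : Fin (d j) =>
            pd ⟨j, b⟩ (pd ⟨j, a⟩ (π j)) wstar).mulVec (fun a => v ⟨j, a⟩))
        = u ⬝ᵥ (Matrix.of fun a b : Fin (d i) =>
            pd ⟨i, b⟩ (pd ⟨i, a⟩ (π i)) wstar).mulVec u := by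
      have h0 : ∀ j : Fin n, j ≠ i → ((fun a => v ⟨j, a⟩) ⬝ᵥ
          (Matrix.of fun a b : Fin (d j) =>
            pd ⟨j, b⟩ (pd ⟨j, a⟩ (π j)) wstar).mulVec (fun a => v ⟨j, a⟩)) = 0 := by
        intro j hj
        have hz : (fun a => v ⟨j, a⟩) = (0 : Fin (d j) → ℝ) := by
          funext a'
          simp [hv, Pi.single_eq_of_ne hj]
        rw [hz]
        simp
      have hi : (fun a => v ⟨i, a⟩) = u := by
        funext a'
        simp [hv, Pi.single_eq_same]
      rw [Finset.sum_eq_single i (fun j _ hj => h0 j hj)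
        (fun h => absurd (Finset.mem_univ i) h), hi]
    rw [hblocks] at this
    exact this
  · intro hneg v hv
    rw [quad v]
    obtain ⟨k, hk⟩ := Function.ne_iff.1 hv
    have hterm : ∀ i : Fin n, ((fun a => v ⟨i, a⟩) ⬝ᵥ
        (Matrix.of fun a b : Fin (d i) =>
          pd ⟨i, b⟩ (pd ⟨i, a⟩ (π i)) wstar).mulVec (fun a => v ⟨i, a⟩)) ≤ 0 := by
      intro i
      by_cases hz : (fun a => v ⟨i, a⟩) = (0 : Fin (d i) → ℝ)
      · rw [hz]; simp
      · exact le_of_lt (hneg i _ hz)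
    have hstrict : ((fun a => v ⟨k.1, a⟩) ⬝ᵥ
        (Matrix.of fun a b : Fin (d k.1) =>
          pd ⟨k.1, b⟩ (pd ⟨k.1, a⟩ (π k.1)) wstar).mulVec (fun a => v ⟨k.1, a⟩)) < 0 := by
      refine hneg k.1 _ (Function.ne_iff.2 ⟨k.2, ?_⟩)
      simpa using hk
    calc (∑ i : Fin n, (fun a => v ⟨i, a⟩) ⬝ᵥ
            (Matrix.of fun a b : Fin (d i) =>
              pd ⟨i, b⟩ (pd ⟨i, a⟩ (π i)) wstar).mulVec (fun a => v ⟨i, a⟩))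
        < ∑ _i : Fin n, (0 : ℝ) := by
          refine Finset.sum_lt_sum (fun i _ => hterm i) ⟨k.1, Finset.mem_univ _, hstrict⟩
      _ = 0 := by simp
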